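/- Convolution-decimation commutation for band-limited filters (core of Proposition 2): let f, g : ℤ → ℂ be absolutely summable with DTFTs f̂, ĝ, and suppose both f̂ and ĝ vanish outside [π(m−1)/D, π(m+1)/D) (mod 2π). Define ḡ(n) = D·g(Dn). Then for every y : ℤ → ℂ absolutely summable, ((y ⋆ g) ⋆ f)(Dn) decimated by D equals ḡ convolved with the D-fold decimation of (y ⋆ f): Σ_k ḡ(n−k) (y ⋆ f)(Dk) = ((y ⋆ g ⋆ f))(Dn) for all n ∈ ℤ. -/

import Mathlib

/-!
The left-hand side is `(g₊ ⋆ (y ⋆ f))(D n)`, where `g₊ = sampled D g` keeps `D • g` on `Dℤ` and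
vanishes elsewhere. The DTFT of `g₊` is the periodization `∑_{r < D} ĝ(ω - 2πr/D)`; multiplied by
`f̂`, which lives in the same window of width `2π/D` as `ĝ`, only the term `r = 0` survives. Since
the DTFT is injective on `ℓ¹`, `g₊ ⋆ f = g ⋆ f`, and associativity and commutativity of `ℓ¹`
convolution turn `g₊ ⋆ (y ⋆ f)` into `(y ⋆ g) ⋆ f`.
-/

open Complex Real

/-- Discrete convolution. -/
noncomputable def dconv (a b : ℤ → ℂ) (n : ℤ) : ℂ :=
  ∑' k : ℤ, a k * b (n - k)

/-- Discrete-time Fourier transform of a sequence. -/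
noncomputable def dtft (x : ℤ → ℂ) (ω : ℝ) : ℂ :=
  ∑' l : ℤ, x l * Complex.exp (-Complex.I * ω * l)

open MeasureTheory

@[simps]
def convolutionEquiv : ℤ × ℤ ≃ ℤ × ℤ where
  toFun p := (p.2, p.1 - p.2)
  invFun q := (q.1 + q.2, q.1)
  left_inv p := by simp
  right_inv q := by simp

section Convolution

variable {a b c : ℤ → ℂ}

lemma summable_norm_mul_sub (ha : Summable fun l => ‖a l‖)
    (hb : Summable fun l => ‖b l‖) :
    Summable fun p : ℤ × ℤ => ‖a p.2 * b (p.1 - p.2)‖ :=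
  convolutionEquiv.summable_iff.mpr (ha.mul_norm hb)

lemma summable_norm_dconv (ha : Summable fun l => ‖a l‖) (hb : Summable fun l => ‖b l‖) :
    Summable fun n => ‖dconv a b n‖ := by
  have h := summable_norm_mul_sub ha hb
  refine h.prod.of_nonneg_of_le (fun n => norm_nonneg _) fun n => ?_
  exact norm_tsum_le_tsum_norm (h.prod_factor n)

lemma dconv_comm (a b : ℤ → ℂ) : dconv a b = dconv b a := by
  ext n
  rw [dconv, ← (Equiv.subLeft n).tsum_eq]
  simp [dconv, mul_comm]

lemma tsum_dconv_mul (ha : Summable fun l => ‖a l‖) (hb : Summable fun l => ‖b l‖)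
    {w : ℤ → ℂ} {C : ℝ} (hw : ∀ n, ‖w n‖ ≤ C) :
    ∑' n, dconv a b n * w n = ∑' k, a k * ∑' j, b j * w (k + j) := by
  set F : ℤ × ℤ → ℂ := fun q => a q.1 * b q.2 * w (q.1 + q.2)
  have hF : Summable F := by
    refine Summable.of_norm_bounded ((ha.mul_norm hb).mul_left C) fun q => ?_
    rw [norm_mul, mul_comm C]
    exact mul_le_mul_of_nonneg_left (hw _) (norm_nonneg _)
  have hFe : Summable (F ∘ convolutionEquiv) := convolutionEquiv.summable_iff.mpr hF
  calc ∑' n, dconv a b n * w n = ∑' p, (F ∘ convolutionEquiv) p := by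
        rw [hFe.tsum_prod]
        refine tsum_congr fun n => ?_
        rw [dconv, ← tsum_mul_right]
        simp [F]
    _ = ∑' q, F q := convolutionEquiv.tsum_eq F
    _ = ∑' k, a k * ∑' j, b j * w (k + j) := by
        rw [hF.tsum_prod]
        simp only [F, ← tsum_mul_left, mul_assoc]

lemma dconv_assoc (ha : Summable fun l => ‖a l‖) (hb : Summable fun l => ‖b l‖)
    (hc : Summable fun l => ‖c l‖) : dconv (dconv a b) c = dconv a (dconv b c) := by
  ext n
  rw [dconv, tsum_dconv_mul ha hb (fun j => hc.le_tsum (n - j) fun _ _ => norm_nonneg _)]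
  simp only [dconv, sub_add_eq_sub_sub]

end Convolution

lemma norm_exp_neg_I_mul_mul (ω : ℝ) (l : ℤ) : ‖cexp (-I * ω * l)‖ = 1 := by
  rw [show -I * ω * l = ((-(ω * l) : ℝ) : ℂ) * I by push_cast; ring]
  exact norm_exp_ofReal_mul_I _

lemma summable_dtft {x : ℤ → ℂ} (hx : Summable fun l => ‖x l‖) (ω : ℝ) :
    Summable fun l : ℤ => x l * cexp (-I * ω * l) := by
  refine Summable.of_norm ?_
  simpa only [norm_mul, norm_exp_neg_I_mul_mul, mul_one] using hx

lemma dtft_dconv {a b : ℤ → ℂ} (ha : Summable fun l => ‖a l‖) (hb : Summable fun l => ‖b l‖)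
    (ω : ℝ) : dtft (dconv a b) ω = dtft a ω * dtft b ω := by
  rw [dtft, tsum_dconv_mul ha hb (fun n => (norm_exp_neg_I_mul_mul ω n).le), dtft,
    ← tsum_mul_right]
  refine tsum_congr fun k => ?_
  rw [dtft, ← tsum_mul_left, ← tsum_mul_left]
  refine tsum_congr fun j => ?_
  rw [Int.cast_add, mul_add, Complex.exp_add]
  ring

lemma integral_exp_I_mul_int_mul (κ : ℤ) :
    ∫ ω in (-π)..π, cexp (I * κ * ω) = if κ = 0 then (2 * π : ℂ) else 0 := by
  split_ifs with hκ
  · simp only [hκ, Int.cast_zero, mul_zero, zero_mul, Complex.exp_zero,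
      intervalIntegral.integral_const, sub_neg_eq_add, real_smul, ofReal_add, mul_one]
    ring
  · have hc : I * κ ≠ 0 := by simp [hκ]
    have hperiod : cexp (I * κ * π) = cexp (I * κ * (-π : ℝ)) :=
      Complex.exp_eq_exp_iff_exists_int.mpr ⟨κ, by push_cast; ring⟩
    rw [integral_exp_mul_complex hc, hperiod, sub_self, zero_div]

theorem integral_dtft_mul_exp {x : ℤ → ℂ} (hx : Summable fun l => ‖x l‖) (c : ℤ) :
    ∫ ω in (-π)..π, dtft x ω * cexp (I * ω * c) = 2 * π * x c := by
  set F : ℤ → ℝ → ℂ := fun l ω => x l * cexp (I * ((c - l : ℤ) : ℂ) * ω)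
  have hF_cont : ∀ l, Continuous (F l) := fun l => by fun_prop
  have hF_norm : ∀ l ω, ‖F l ω‖ = ‖x l‖ := fun l ω => by
    rw [norm_mul, show I * ((c - l : ℤ) : ℂ) * ω = ((((c - l : ℤ) : ℝ) * ω : ℝ) : ℂ) * I by
      push_cast; ring, norm_exp_ofReal_mul_I, mul_one]
  have hF_sum : ∀ ω : ℝ, HasSum (fun l => F l ω) (dtft x ω * cexp (I * ω * c)) := fun ω => by
    refine ((summable_dtft hx ω).hasSum.mul_right _).congr_fun fun l => ?_
    simp only [F, mul_assoc, ← Complex.exp_add]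
    congr 2
    push_cast
    ring
  have hF_int : ∀ l, ∫ ω in (-π)..π, F l ω = if l = c then 2 * π * x c else 0 := fun l => by
    rw [intervalIntegral.integral_const_mul, integral_exp_I_mul_int_mul]
    by_cases h : l = c <;> simp [h, sub_eq_zero, Ne.symm, mul_comm]
  have hsum := intervalIntegral.hasSum_integral_of_dominated_convergence (μ := volume)
    (a := -π) (b := π) (fun l _ => ‖x l‖) (fun l => (hF_cont l).aestronglyMeasurable)
    (fun l => ae_of_all _ fun ω _ => (hF_norm l ω).le) (ae_of_all _ fun _ _ => hx)
    intervalIntegrable_const (ae_of_all _ fun ω _ => hF_sum ω)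
  simp only [hF_int] at hsum
  exact hsum.unique (hasSum_ite_eq c _)

theorem eq_of_dtft_eq {a b : ℤ → ℂ} (ha : Summable fun l => ‖a l‖)
    (hb : Summable fun l => ‖b l‖) (h : dtft a = dtft b) : a = b := by
  ext c
  have hc := integral_dtft_mul_exp ha c
  rw [h, integral_dtft_mul_exp hb c] at hc
  exact (mul_right_injective₀ (by simp [Real.pi_ne_zero])) hc.symm

lemma IsPrimitiveRoot.geom_sum_zpow_eq_ite {K : Type*} [Field K] {ζ : K} {D : ℕ}
    (hζ : IsPrimitiveRoot ζ D) (j : ℤ) :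
    ∑ r ∈ Finset.range D, (ζ ^ j) ^ r = if (D : ℤ) ∣ j then (D : K) else 0 := by
  split_ifs with h
  · simp [(hζ.zpow_eq_one_iff_dvd j).mpr h]
  · have hne : ζ ^ j ≠ 1 := mt (hζ.zpow_eq_one_iff_dvd j).mp h
    rw [geom_sum_eq hne, ← zpow_natCast, ← zpow_mul, mul_comm, zpow_mul, zpow_natCast,
      hζ.pow_eq_one, one_zpow, sub_self, zero_div]

/-- The paper's decimated filter `ḡ(n) = D g(D n)` is `sampled D g (D n)`. -/
noncomputable def sampled (D : ℕ) (x : ℤ → ℂ) (j : ℤ) : ℂ :=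
  if (D : ℤ) ∣ j then D * x j else 0

lemma summable_norm_sampled (D : ℕ) {x : ℤ → ℂ} (hx : Summable fun l => ‖x l‖) :
    Summable fun l => ‖sampled D x l‖ := by
  refine (hx.mul_left (D : ℝ)).of_nonneg_of_le (fun _ => norm_nonneg _) fun j => ?_
  unfold sampled
  split_ifs
  · simp
  · simp only [norm_zero]
    positivity

lemma dtft_sampled {D : ℕ} (hD : D ≠ 0) {x : ℤ → ℂ} (hx : Summable fun l => ‖x l‖) (ω : ℝ) :
    dtft (sampled D x) ω = ∑ r ∈ Finset.range D, dtft x (ω - 2 * π * r / D) := by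
  set ζ : ℂ := cexp (2 * π * I / D)
  have hζ : IsPrimitiveRoot ζ D := Complex.isPrimitiveRoot_exp D hD
  have hterm : ∀ l : ℤ, sampled D x l * cexp (-I * ω * l)
      = ∑ r ∈ Finset.range D, x l * cexp (-I * ((ω - 2 * π * r / D : ℝ) : ℂ) * l) := fun l => by
    have hshift : ∀ r : ℕ, cexp (-I * ((ω - 2 * π * r / D : ℝ) : ℂ) * l)
        = cexp (-I * ω * l) * (ζ ^ l) ^ r := fun r => by
      rw [← Complex.exp_int_mul, ← Complex.exp_nat_mul, ← Complex.exp_add]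
      congr 1
      push_cast
      ring
    simp only [hshift, ← Finset.mul_sum, hζ.geom_sum_zpow_eq_ite, sampled]
    split_ifs <;> ring
  rw [dtft, tsum_congr hterm, Summable.tsum_finsetSum fun r _ => summable_dtft hx _]
  rfl

def IsBandLimited (x : ℤ → ℂ) (a b : ℝ) : Prop :=
  ∀ ω : ℝ, (¬ ∃ k : ℤ, a ≤ ω + 2 * π * k ∧ ω + 2 * π * k < b) → dtft x ω = 0

lemma IsBandLimited.dtft_sub_mul_dtft_eq_zero {D : ℕ} {f g : ℤ → ℂ} {a b : ℝ}
    (hg : IsBandLimited g a b) (hf : IsBandLimited f a b) (hab : b - a ≤ 2 * π / D)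
    {r : ℕ} (hr0 : r ≠ 0) (hrD : r < D) (ω : ℝ) :
    dtft g (ω - 2 * π * r / D) * dtft f ω = 0 := by
  by_contra hne
  obtain ⟨hg0, hf0⟩ := mul_ne_zero_iff.mp hne
  obtain ⟨k, hk_ge, hk_lt⟩ := not_not.mp (mt (hf ω) hf0)
  obtain ⟨k', hk'_ge, hk'_lt⟩ := not_not.mp (mt (hg _) hg0)
  have hD : (0 : ℝ) < D := by exact_mod_cast (Nat.zero_le r).trans_lt hrD
  set t : ℤ := r + D * (k - k')
  have ht_eq : 2 * π / D * t
      = (ω + 2 * π * k) - (ω - 2 * π * r / D + 2 * π * k') := by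
    simp only [t]
    push_cast
    field_simp
    ring
  have hw : 0 < 2 * π / D := by positivity
  -- `2πt/D` is a difference of two points of `[a, b)`, so `|t| < 1`, i.e. `D ∣ r`.
  have ht_lt : 2 * π / D * |(t : ℝ)| < 2 * π / D := calc
    2 * π / D * |(t : ℝ)| = |(ω + 2 * π * k) - (ω - 2 * π * r / D + 2 * π * k')| := by
      rw [← ht_eq, abs_mul, abs_of_pos hw]
    _ < b - a := by rw [abs_lt]; constructor <;> linarith
    _ ≤ 2 * π / D := hab
  have ht : t = 0 :=
    Int.abs_lt_one_iff.mp (by exact_mod_cast (mul_lt_iff_lt_one_right hw).mp ht_lt)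
  have hdvd : D ∣ r := by
    refine Int.natCast_dvd_natCast.mp ⟨k' - k, ?_⟩
    linear_combination ht
  exact hr0 (Nat.eq_zero_of_dvd_of_lt hdvd hrD)

theorem dconv_sampled_eq_dconv {D : ℕ} (hD : D ≠ 0) {f g : ℤ → ℂ} {a b : ℝ}
    (hf : Summable fun l => ‖f l‖) (hg : Summable fun l => ‖g l‖)
    (hab : b - a ≤ 2 * π / D) (hfband : IsBandLimited f a b) (hgband : IsBandLimited g a b) :
    dconv (sampled D g) f = dconv g f := by
  refine eq_of_dtft_eq (summable_norm_dconv (summable_norm_sampled D hg) hf)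
    (summable_norm_dconv hg hf) (funext fun ω => ?_)
  rw [dtft_dconv (summable_norm_sampled D hg) hf, dtft_dconv hg hf, dtft_sampled hD hg,
    Finset.sum_mul, Finset.sum_eq_single_of_mem 0 (by simpa using Nat.pos_of_ne_zero hD)
      fun r hr hr0 => hgband.dtft_sub_mul_dtft_eq_zero hfband hab hr0 (Finset.mem_range.mp hr) ω]
  simp

lemma dconv_sampled_apply_mul {D : ℕ} (hD : D ≠ 0) (g h : ℤ → ℂ) (n : ℤ) :
    dconv (sampled D g) h (D * n) = ∑' k : ℤ, ((D : ℂ) * g (D * (n - k))) * h (D * k) := by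
  have hinj : Function.Injective fun k : ℤ => (D : ℤ) * (n - k) := fun k k' hkk' => by
    simpa using mul_left_cancel₀ (Int.natCast_ne_zero.mpr hD) hkk'
  rw [dconv, ← hinj.tsum_eq]
  · refine tsum_congr fun k => ?_
    simp only [sampled, dvd_mul_right, if_true]
    ring_nf
  · intro j hj
    obtain ⟨u, rfl⟩ : (D : ℤ) ∣ j := by
      by_contra h
      exact hj (by simp [sampled, h])
    exact ⟨n - u, by ring⟩

theorem convolution_decimation_commutation (D : ℕ) (hD : 2 ≤ D) (m : ℤ)
    (f g y : ℤ → ℂ)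
    (hf : Summable fun l => ‖f l‖) (hg : Summable fun l => ‖g l‖)
    (hy : Summable fun l => ‖y l‖)
    -- f̂ and ĝ vanish outside [π(m−1)/D, π(m+1)/D) modulo 2π
    (hfband : ∀ ω : ℝ,
      (¬ ∃ k : ℤ, π * (m - 1) / D ≤ ω + 2 * π * k ∧ ω + 2 * π * k < π * (m + 1) / D) →
      dtft f ω = 0)
    (hgband : ∀ ω : ℝ,
      (¬ ∃ k : ℤ, π * (m - 1) / D ≤ ω + 2 * π * k ∧ ω + 2 * π * k < π * (m + 1) / D) →
      dtft g ω = 0) :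
    ∀ n : ℤ,
      (∑' k : ℤ, ((D : ℂ) * g (D * (n - k))) * dconv y f (D * k))
        = dconv (dconv y g) f (D * n) := by
  intro n
  have hD0 : D ≠ 0 := by omega
  have hwidth : π * (m + 1) / D - π * (m - 1) / D ≤ 2 * π / D := le_of_eq (by ring)
  have hs := summable_norm_sampled D hg
  calc (∑' k : ℤ, ((D : ℂ) * g (D * (n - k))) * dconv y f (D * k))
      = dconv (sampled D g) (dconv f y) (D * n) := by
        rw [dconv_sampled_apply_mul hD0, dconv_comm f y]
    _ = dconv (dconv (sampled D g) f) y (D * n) := by rw [dconv_assoc hs hf hy]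
    _ = dconv (dconv g f) y (D * n) := by
        rw [dconv_sampled_eq_dconv hD0 hf hg hwidth hfband hgband]
    _ = dconv (dconv y g) f (D * n) := by rw [dconv_comm, dconv_assoc hy hg hf]
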